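/- Let ζ = (v_0, u_1, v_1, …, u_N, v_N, u_{N+1}) ∈ 𝒲 satisfy v_{t−1} − u_t ∈ 𝒰_t for t = 1,…,N+1. Then there is a path (y_0, …, y_N) such that y_0 = v_0 and y_t − v_t ∈ 𝒳_t for t = 0, 1, …, N. -/

import Mathlib

open MeasureTheory

noncomputable section

/-- Scalar product of two vectors in `ℝ^k`. -/
def dot {k : ℕ} (p a : Fin k → ℝ) : ℝ := ∑ i, p i * a i

/-- `ℓ¹`-norm of a vector in `ℝ^k` (sum of absolute values of the coordinates). -/
def l1 {k : ℕ} (a : Fin k → ℝ) : ℝ := ∑ i, |a i|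

/-- The dual cone of a set `X ⊆ ℝ^k`. -/
def dualCone {k : ℕ} (X : Set (Fin k → ℝ)) : Set (Fin k → ℝ) :=
  {p | ∀ a ∈ X, 0 ≤ dot p a}

/-- Positive part of the (extended) logarithm, as an extended nonnegative real. -/
def logPos (r : ℝ) : ENNReal := ENNReal.ofReal (Real.log r)

/-- Negative part of the (extended) logarithm, with the convention `ln 0 = -∞`
(and also `ln r = -∞` for `r < 0`, a case that never occurs below). -/
def logNeg (r : ℝ) : ENNReal := if r ≤ 0 then ⊤ else ENNReal.ofReal (-(Real.log r))

/-- `elogLE μ f g` expresses the inequality `E ln f ≤ E ln g` of (possibly infinite)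
expectations of logarithms, with the convention `ln 0 = -∞`:
it says `E (ln f)⁺ + E (ln g)⁻ ≤ E (ln g)⁺ + E (ln f)⁻` in `[0,∞]`. -/
def elogLE {Ω : Type*} [MeasurableSpace Ω] (μ : Measure Ω) (f g : Ω → ℝ) : Prop :=
  (∫⁻ ω, logPos (f ω) ∂μ) + (∫⁻ ω, logNeg (g ω) ∂μ) ≤
    (∫⁻ ω, logPos (g ω) ∂μ) + (∫⁻ ω, logNeg (f ω) ∂μ)

/-- Membership in `L_∞(Ω, Ft, P; ℝ^k)`: `Ft`-measurable and essentially bounded. -/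
def MemLinf {Ω : Type*} [MeasurableSpace Ω] (μ : Measure Ω) (Ft : MeasurableSpace Ω)
    {k : ℕ} (x : Ω → Fin k → ℝ) : Prop :=
  Measurable[Ft] x ∧ ∃ C : ℝ, ∀ᵐ ω ∂μ, l1 (x ω) ≤ C

/-- The setting of a stochastic von Neumann–Gale dynamical system over the time
horizon `N`, with state dimensions `m t`:  a filtration `F`, random closed cones
`X t ω ⊆ ℝ^{m t}` and random closed convex cones
`Z t ω ⊆ X (t-1) ω × X t ω` (for `1 ≤ t ≤ N`) with measurable graphs, the
projection of `Z t ω` on the first factor being `X (t-1) ω`. -/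
structure VNG (Ω : Type*) [m0 : MeasurableSpace Ω] (μ : Measure Ω) (N : ℕ) (m : ℕ → ℕ) where
  F : ℕ → MeasurableSpace Ω
  X : (t : ℕ) → Ω → Set (Fin (m t) → ℝ)
  Z : (t : ℕ) → Ω → Set ((Fin (m (t - 1)) → ℝ) × (Fin (m t) → ℝ))
  F_mono : Monotone F
  F_le : ∀ t, F t ≤ m0
  F_top : F N = m0
  F_ext : F (N + 1) = F N
  F_null : ∀ t (s : Set Ω), μ s = 0 → MeasurableSet[F t] s
  X_closed : ∀ t, t ≤ N → ∀ ω, IsClosed (X t ω)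
  X_cone : ∀ t, t ≤ N → ∀ ω, ∀ a ∈ X t ω, ∀ c : ℝ, 0 ≤ c → c • a ∈ X t ω
  X_meas : ∀ t, t ≤ N →
    MeasurableSet[(F t).prod inferInstance] {q : Ω × (Fin (m t) → ℝ) | q.2 ∈ X t q.1}
  Z_closed : ∀ t, 1 ≤ t → t ≤ N → ∀ ω, IsClosed (Z t ω)
  Z_convex : ∀ t, 1 ≤ t → t ≤ N → ∀ ω, Convex ℝ (Z t ω)
  Z_cone : ∀ t, 1 ≤ t → t ≤ N → ∀ ω, ∀ q ∈ Z t ω, ∀ c : ℝ, 0 ≤ c → c • q ∈ Z t ω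
  Z_sub : ∀ t, 1 ≤ t → t ≤ N → ∀ ω, Z t ω ⊆ (X (t - 1) ω) ×ˢ (X t ω)
  Z_meas : ∀ t, 1 ≤ t → t ≤ N →
    MeasurableSet[(F t).prod inferInstance]
      {q : Ω × ((Fin (m (t - 1)) → ℝ) × (Fin (m t) → ℝ)) | q.2 ∈ Z t q.1}
  Z_proj : ∀ t, 1 ≤ t → t ≤ N → ∀ ω, Prod.fst '' (Z t ω) = X (t - 1) ω

namespace VNG

variable {Ω : Type*} [m0 : MeasurableSpace Ω] {μ : Measure Ω} {N : ℕ} {m : ℕ → ℕ}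

/-- A random state of the system at time `t`: an element of `𝒳_t`. -/
def RandomState (S : VNG Ω μ N m) (t : ℕ) (x : Ω → Fin (m t) → ℝ) : Prop :=
  MemLinf μ (S.F t) x ∧ ∀ᵐ ω ∂μ, x ω ∈ S.X t ω

/-- A path (trajectory) of the system: random states `x 0, …, x N` with
`(x (t-1) ω, x t ω) ∈ Z t ω` a.s. for `t = 1, …, N`. -/
def IsPath (S : VNG Ω μ N m) (x : (t : ℕ) → Ω → Fin (m t) → ℝ) : Prop :=
  (∀ t, t ≤ N → S.RandomState t (x t)) ∧
  (∀ t, 1 ≤ t → t ≤ N → ∀ᵐ ω ∂μ, (x (t - 1) ω, x t ω) ∈ S.Z t ω)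

/-- A dual path: integrable `F t`-measurable `p t`, `t = 1, …, N+1`, with values in the
dual cones `X_{t-1}^*` a.s., such that `E(p_{t+1} | F_t)·b ≤ p_t·a` for all
`(a,b) ∈ Z t ω`, almost surely, for `t = 1, …, N`. -/
def IsDualPath (S : VNG Ω μ N m) (p : (t : ℕ) → Ω → Fin (m (t - 1)) → ℝ) : Prop :=
  (∀ t, 1 ≤ t → t ≤ N + 1 →
    Measurable[S.F t] (p t) ∧ Integrable (p t) μ ∧
      ∀ᵐ ω ∂μ, p t ω ∈ dualCone (S.X (t - 1) ω)) ∧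
  (∀ t, 1 ≤ t → t ≤ N →
    ∀ᵐ ω ∂μ, ∀ ab ∈ S.Z t ω, dot ((μ[p (t + 1) | S.F t]) ω) ab.2 ≤ dot (p t ω) ab.1)

/-- The dual path `p` supports the path `x`: `p_{t+1}·x_t = 1` a.s. for `t = 0, …, N`. -/
def Supports (S : VNG Ω μ N m) (p : (t : ℕ) → Ω → Fin (m (t - 1)) → ℝ)
    (x : (t : ℕ) → Ω → Fin (m t) → ℝ) : Prop :=
  ∀ t, t ≤ N → ∀ᵐ ω ∂μ, dot (p (t + 1) ω) (x t ω) = 1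

/-- A path is rapid if some dual path supports it. -/
def Rapid (S : VNG Ω μ N m) (x : (t : ℕ) → Ω → Fin (m t) → ℝ) : Prop :=
  ∃ p, S.IsDualPath p ∧ S.Supports p x

/-- Assumption (A1). -/
def A1 (S : VNG Ω μ N m) : Prop :=
  ∀ t, t ≤ N → ∃ (q : Ω → Fin (m t) → ℝ) (H : Ω → ℝ),
    Measurable[S.F t] q ∧ Measurable[S.F t] H ∧ (∀ ω, 1 ≤ H ω) ∧
    Integrable (fun ω => Real.log (H ω)) μ ∧
    (∀ ω, q ω ∈ dualCone (S.X t ω)) ∧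
    (∀ ω, ∀ a ∈ S.X t ω, (H ω)⁻¹ * l1 a ≤ dot (q ω) a ∧ dot (q ω) a ≤ H ω * l1 a)

/-- Assumption (A2). -/
def A2 (S : VNG Ω μ N m) : Prop :=
  ∀ t, 1 ≤ t → t ≤ N → ∀ ω, ∀ a ∈ S.X (t - 1) ω, ∃ b ∈ S.X t ω, (a, b) ∈ S.Z t ω

/-- Assumption (A3). -/
def A3 (S : VNG Ω μ N m) : Prop :=
  ∃ K : ℕ → ℝ, ∀ t, 1 ≤ t → t ≤ N → ∀ ω, ∀ ab ∈ S.Z t ω, l1 ab.2 ≤ K t * l1 ab.1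

/-- Assumption (A4). -/
def A4 (S : VNG Ω μ N m) : Prop :=
  ∀ t, 1 ≤ t → t ≤ N →
    ∃ (x' : Ω → Fin (m (t - 1)) → ℝ) (y' : Ω → Fin (m t) → ℝ) (C ε : ℝ),
      0 < ε ∧ Measurable[S.F t] x' ∧ Measurable[S.F t] y' ∧
      (∀ ω, l1 (x' ω) ≤ C ∧ l1 (y' ω) ≤ C) ∧
      (∀ ω, (x' ω, y' ω) ∈ S.Z t ω) ∧
      (∀ ω, ∀ b, l1 (b - y' ω) ≤ ε → b ∈ S.X t ω)

open Classical in
/-- Membership in the class `Ψ_N` of utility functions. -/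
def MemPsi (S : VNG Ω μ N m) (ψ : Ω → (Fin (m N) → ℝ) → ℝ) : Prop :=
  (∀ ω, ∀ a ∈ S.X N ω, 0 ≤ ψ ω a) ∧
  (∀ ω, ContinuousOn (ψ ω) (S.X N ω)) ∧
  Measurable[(S.F N).prod inferInstance]
    (fun q : Ω × (Fin (m N) → ℝ) =>
      if q.2 ∈ S.X N q.1 then ((ψ q.1 q.2 : ℝ) : EReal) else (⊤ : EReal)) ∧
  (∀ ω, ∀ a ∈ S.X N ω, ∀ a' ∈ S.X N ω, ψ ω a + ψ ω a' ≤ ψ ω (a + a')) ∧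
  (∀ ω, ∀ a ∈ S.X N ω, ∀ c : ℝ, 0 ≤ c → ψ ω (c • a) = c * ψ ω a) ∧
  ∃ Hψ : Ω → ℝ, (∀ ω, 0 < Hψ ω) ∧
    Integrable (fun ω => |Real.log (Hψ ω)|) μ ∧
    (∀ ω, ∀ a ∈ S.X N ω, (Hψ ω)⁻¹ * l1 a ≤ ψ ω a ∧ ψ ω a ≤ Hψ ω * l1 a)

/-- The fixed initial state `x₀`: `F 0`-measurable, essentially bounded, with a ball
`B(x₀(ω), ε₀) ⊆ X 0 ω` a.s. for some constant `ε₀ > 0`. -/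
def IsInitial (S : VNG Ω μ N m) (x₀ : Ω → Fin (m 0) → ℝ) : Prop :=
  Measurable[S.F 0] x₀ ∧ (∃ C : ℝ, ∀ᵐ ω ∂μ, l1 (x₀ ω) ≤ C) ∧
  ∃ ε₀ : ℝ, 0 < ε₀ ∧ ∀ᵐ ω ∂μ, ∀ b, l1 (b - x₀ ω) ≤ ε₀ → b ∈ S.X 0 ω

/-- Membership in the set `𝒲` of sequences `ζ = (v₀, u₁, v₁, …, u_N, v_N, u_{N+1})`. -/
def MemW (S : VNG Ω μ N m) (ψ : Ω → (Fin (m N) → ℝ) → ℝ) (x₀ : Ω → Fin (m 0) → ℝ)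
    (v : (t : ℕ) → Ω → Fin (m t) → ℝ) (u : (t : ℕ) → Ω → Fin (m (t - 1)) → ℝ) : Prop :=
  v 0 = x₀ ∧
  (∀ t, t ≤ N → S.RandomState t (v t)) ∧
  (∀ t, 1 ≤ t → t ≤ N + 1 → MemLinf μ (S.F t) (u t) ∧ ∀ᵐ ω ∂μ, u t ω ∈ S.X (t - 1) ω) ∧
  (∀ t, 1 ≤ t → t ≤ N → ∀ᵐ ω ∂μ, (u t ω, v t ω) ∈ S.Z t ω) ∧
  (∫⁻ ω, logNeg (ψ ω (u (N + 1) ω)) ∂μ) < ⊤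

end VNG

/-! The path is built forward from `y 0 = v 0` by `y (t + 1) = w + v (t + 1)`, where `w` is an
`F (t + 1)`-measurable selection with `(y t - u (t + 1), w) ∈ Z (t + 1)`. It exists because
`y t - u (t + 1) = (y t - v t) + (v t - u (t + 1))` lies in `X t`, which is closed under addition,
and by (A2) the section of `Z (t + 1)` over it is nonempty. Adding `(u (t + 1), v (t + 1))` gives
`(y t, y (t + 1)) ∈ Z (t + 1)`, while `y (t + 1) - v (t + 1) = w ∈ X (t + 1)`, bounded by (A3).

The selection is the Kuratowski–Ryll-Nardzewski theorem for a closed-valued multifunction with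
`F (t + 1) ⊗ 𝓑`-measurable graph. Since `F (t + 1)` contains the null sets, the measurable
projection theorem it needs follows from the null-measurability of analytic sets, which in turn
comes from their inner approximation by compact sets. -/

open Set Filter Topology

section AnalyticSet

variable {X : Type*} [MeasurableSpace X]

theorem exists_measure_image_le_image_inter_add (ν : Measure X) [IsFiniteMeasure ν]
    (f : (ℕ → ℕ) → X) (s : Set (ℕ → ℕ)) (k : ℕ) {δ : ENNReal} (hδ : 0 < δ) :
    ∃ j, ν (f '' s) ≤ ν (f '' (s ∩ {σ | σ k ≤ j})) + δ := by
  have hmono : Monotone fun j : ℕ => f '' (s ∩ {σ : ℕ → ℕ | σ k ≤ j}) := fun i j hij =>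
    image_mono (inter_subset_inter_right _ fun σ hσ => le_trans hσ hij)
  have hsup : ν (f '' s) = ⨆ j, ν (f '' (s ∩ {σ | σ k ≤ j})) := by
    rw [← hmono.measure_iUnion, ← image_iUnion, ← inter_iUnion]
    congr 2
    ext σ
    simpa using fun _ => ⟨σ k, le_rfl⟩
  by_cases h0 : ν (f '' s) = 0
  · exact ⟨0, by simp [h0]⟩
  have hlt : ν (f '' s) - δ < ⨆ j, ν (f '' (s ∩ {σ | σ k ≤ j})) :=
    hsup ▸ ENNReal.sub_lt_self (measure_ne_top _ _) h0 hδ.ne'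
  obtain ⟨j, hj⟩ := lt_iSup_iff.1 hlt
  exact ⟨j, tsub_le_iff_right.1 hj.le⟩

/-- The bounds `n` are chosen one coordinate at a time, the `k`-th one losing at most `δ k`
of measure, where `∑ δ k < ε`. -/
theorem exists_measure_range_le_image_bounded_add (ν : Measure X) [IsFiniteMeasure ν]
    (f : (ℕ → ℕ) → X) {ε : ENNReal} (hε : 0 < ε) :
    ∃ n : ℕ → ℕ, ∀ k, ν (range f) ≤ ν (f '' {σ | ∀ i < k, σ i ≤ n i}) + ε := by
  obtain ⟨δ, hδ, hδε⟩ := ENNReal.exists_pos_sum_of_countable' hε.ne' ℕ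
  choose J hJ using fun k s => exists_measure_image_le_image_inter_add ν f s k (hδ k)
  let S : ℕ → Set (ℕ → ℕ) := fun k => Nat.rec univ (fun k s => s ∩ {σ | σ k ≤ J k s}) k
  refine ⟨fun k => J k (S k), fun k => ?_⟩
  have hS : ∀ k σ, σ ∈ S k ↔ ∀ i < k, σ i ≤ J i (S i) := by
    intro k
    induction k with
    | zero => simp [S]
    | succ k ih =>
      intro σ
      change σ ∈ S k ∧ σ k ≤ J k (S k) ↔ _
      rw [ih]
      simp only [Nat.lt_succ_iff_lt_or_eq]
      constructor
      · rintro ⟨h, hk⟩ i (hi | rfl)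
        exacts [h i hi, hk]
      · exact fun h => ⟨fun i hi => h i (Or.inl hi), h k (Or.inr rfl)⟩
  have hsum : ∀ k, ν (range f) ≤ ν (f '' S k) + ∑ i ∈ Finset.range k, δ i := by
    intro k
    induction k with
    | zero => simp [S]
    | succ k ih =>
      calc ν (range f) ≤ ν (f '' S k) + ∑ i ∈ Finset.range k, δ i := ih
        _ ≤ ν (f '' S (k + 1)) + δ k + ∑ i ∈ Finset.range k, δ i := by gcongr; exact hJ k (S k)
        _ = ν (f '' S (k + 1)) + ∑ i ∈ Finset.range (k + 1), δ i := by
          rw [Finset.sum_range_succ]; ring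
  calc ν (range f) ≤ ν (f '' S k) + ∑ i ∈ Finset.range k, δ i := hsum k
    _ ≤ ν (f '' S k) + ε := by gcongr; exact (ENNReal.sum_le_tsum _).trans hδε.le
    _ = _ := by congr 3; ext σ; exact hS k σ

theorem isCompact_setOf_forall_le (n : ℕ → ℕ) : IsCompact {σ : ℕ → ℕ | ∀ i, σ i ≤ n i} := by
  have : {σ : ℕ → ℕ | ∀ i, σ i ≤ n i} = univ.pi fun i => Iic (n i) := by ext σ; simp [Pi.le_def]
  rw [this]
  exact isCompact_univ_pi fun i => (finite_Iic (n i)).isCompact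

/-- Points of `f '' {σ | ∀ i < k, σ i ≤ n i}` close to `x` are truncated into the compact box
`σ ≤ n` without changing their first `k` coordinates; a convergent subsequence then yields a
preimage of `x` in the box. -/
theorem mem_image_of_forall_mem_closure_image {T : Type*} [MetricSpace T]
    {f : (ℕ → ℕ) → T} (hf : Continuous f) (n : ℕ → ℕ) {x : T}
    (hx : ∀ k, x ∈ closure (f '' {σ | ∀ i < k, σ i ≤ n i})) :
    x ∈ f '' {σ | ∀ i, σ i ≤ n i} := by
  have hnear : ∀ k : ℕ, ∃ σ : ℕ → ℕ, (∀ i < k, σ i ≤ n i) ∧ dist x (f σ) < 1 / (k + 1) := by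
    intro k
    obtain ⟨_, ⟨σ, hσ, rfl⟩, hd⟩ := Metric.mem_closure_iff.1 (hx k) (1 / (k + 1)) (by positivity)
    exact ⟨σ, hσ, hd⟩
  choose σ hσn hσx using hnear
  let z : ℕ → ℕ → ℕ := fun k i => min (σ k i) (n i)
  obtain ⟨a, ha, φ, hφ, hza⟩ :=
    (isCompact_setOf_forall_le n).tendsto_subseq (x := z) fun k i => min_le_right _ _
  have hσa : Tendsto (σ ∘ φ) atTop (𝓝 a) := by
    refine tendsto_pi_nhds.2 fun i => ((tendsto_pi_nhds.1 hza) i).congr' ?_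
    filter_upwards [eventually_gt_atTop i] with j hj
    exact min_eq_left (hσn (φ j) i (hj.trans_le (hφ.id_le j)))
  have hfσx : Tendsto (fun k => f (σ k)) atTop (𝓝 x) := by
    refine tendsto_iff_dist_tendsto_zero.2 <|
      squeeze_zero (fun _ => dist_nonneg) (fun k => ?_) tendsto_one_div_add_atTop_nhds_zero_nat
    rw [dist_comm]
    exact (hσx k).le
  exact ⟨a, ha, tendsto_nhds_unique ((hf.tendsto a).comp hσa) (hfσx.comp hφ.tendsto_atTop)⟩

variable [TopologicalSpace X] [PolishSpace X] [BorelSpace X]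

theorem MeasureTheory.AnalyticSet.exists_isCompact_subset_measure_le_add (ν : Measure X)
    [IsFiniteMeasure ν] {A : Set X} (hA : AnalyticSet A) {ε : ENNReal} (hε : 0 < ε) :
    ∃ K, IsCompact K ∧ K ⊆ A ∧ ν A ≤ ν K + ε := by
  rw [AnalyticSet] at hA
  rcases hA with rfl | ⟨f, hf, rfl⟩
  · exact ⟨∅, isCompact_empty, subset_rfl, by simp⟩
  let := TopologicalSpace.upgradeIsCompletelyMetrizable X
  obtain ⟨n, hn⟩ := exists_measure_range_le_image_bounded_add ν f hε
  let T : ℕ → Set X := fun k => closure (f '' {σ | ∀ i < k, σ i ≤ n i})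
  have hT : Antitone T := fun k l hkl =>
    closure_mono <| image_mono fun σ hσ i hi => hσ i (hi.trans_le hkl)
  refine ⟨f '' {σ | ∀ i, σ i ≤ n i}, (isCompact_setOf_forall_le n).image hf,
    image_subset_range _ _, ?_⟩
  calc ν (range f) ≤ (⨅ k, ν (T k)) + ε := by
        rw [ENNReal.iInf_add]
        exact le_iInf fun k => (hn k).trans (by gcongr; exact subset_closure)
    _ = ν (⋂ k, T k) + ε := by
        rw [hT.measure_iInter (fun k => isClosed_closure.measurableSet.nullMeasurableSet)
          ⟨0, measure_ne_top _ _⟩]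
    _ ≤ ν (f '' {σ | ∀ i, σ i ≤ n i}) + ε := by
        gcongr
        exact fun x hx => mem_image_of_forall_mem_closure_image hf n (mem_iInter.1 hx)

theorem MeasureTheory.AnalyticSet.nullMeasurableSet (ν : Measure X) [IsFiniteMeasure ν] {A : Set X}
    (hA : AnalyticSet A) : NullMeasurableSet A ν := by
  choose K hKc hKA hK using fun n : ℕ =>
    hA.exists_isCompact_subset_measure_le_add ν (ε := ((n : ENNReal) + 1)⁻¹) (by simp)
  have hB : MeasurableSet (⋃ n, K n) := .iUnion fun n => (hKc n).isClosed.measurableSet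
  have hAB : ν A ≤ ν (⋃ n, K n) := by
    refine ENNReal.le_of_forall_pos_le_add fun ε hε _ => ?_
    obtain ⟨n, hn⟩ := ENNReal.exists_inv_nat_lt (by simpa using hε.ne' : (ε : ENNReal) ≠ 0)
    calc ν A ≤ ν (K n) + ((n : ENNReal) + 1)⁻¹ := hK n
      _ ≤ ν (⋃ n, K n) + ε := by
        gcongr
        · exact subset_iUnion K n
        · exact (ENNReal.inv_le_inv.2 le_self_add).trans hn.le
  exact hB.nullMeasurableSet.congr <| ae_eq_of_subset_of_measure_ge (iUnion_subset hKA) hAB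
    hB.nullMeasurableSet (measure_ne_top _ _)

end AnalyticSet

section Projection

variable {Ω Y : Type*} [MeasurableSpace Y]

/-- The sets of this form are a σ-algebra containing the rectangles: countably many `Φ`s can be
interleaved into one via `Nat.pair`. -/
theorem MeasurableSet.exists_measurable_prodMap_preimage [MeasurableSpace Ω]
    {G : Set (Ω × Y)} (hG : MeasurableSet G) :
    ∃ Φ : Ω → ℕ → ℝ, Measurable Φ ∧
      ∃ G' : Set ((ℕ → ℝ) × Y), MeasurableSet G' ∧ G = Prod.map Φ id ⁻¹' G' := by
  let P : Set (Ω × Y) → Prop := fun s => ∃ Φ : Ω → ℕ → ℝ, Measurable Φ ∧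
      ∃ G' : Set ((ℕ → ℝ) × Y), MeasurableSet G' ∧ s = Prod.map Φ id ⁻¹' G'
  have hunion : ∀ s : ℕ → Set (Ω × Y), (∀ n, P (s n)) → P (⋃ n, s n) := by
    intro s hs
    choose Φ hΦ G' hG' hs using hs
    let r : ℕ → (ℕ → ℝ) → ℕ → ℝ := fun n x i => x (Nat.pair n i)
    have hr : ∀ n, Measurable (r n) := fun n =>
      measurable_pi_lambda _ fun i => measurable_pi_apply _
    refine ⟨fun ω j => Φ (Nat.unpair j).1 ω (Nat.unpair j).2,
      measurable_pi_lambda _ fun j => measurable_pi_iff.1 (hΦ _) _,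
      ⋃ n, Prod.map (r n) id ⁻¹' G' n, .iUnion fun n => (hr n).prodMap measurable_id (hG' n), ?_⟩
    rw [preimage_iUnion]
    refine iUnion_congr fun n => ?_
    rw [hs n]
    ext p
    simp [r, Prod.map, Nat.unpair_pair]
  let M : MeasurableSpace (Ω × Y) :=
    { MeasurableSet' := P
      measurableSet_empty := ⟨0, measurable_const, ∅, .empty, rfl⟩
      measurableSet_compl := by
        rintro s ⟨Φ, hΦ, G', hG', rfl⟩
        exact ⟨Φ, hΦ, G'ᶜ, hG'.compl, rfl⟩
      measurableSet_iUnion := hunion }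
  have hle : MeasurableSpace.prod ‹_› ‹_› ≤ M := by
    refine sup_le ?_ ?_
    · rintro s ⟨A, hA, rfl⟩
      refine ⟨fun ω _ => A.indicator 1 ω, measurable_pi_lambda _ fun _ =>
          measurable_one.indicator hA, {x | x.1 0 = 1},
        (measurable_pi_apply 0).comp measurable_fst (measurableSet_singleton 1), ?_⟩
      ext p
      by_cases h : p.1 ∈ A <;> simp [h]
    · rintro s ⟨B, hB, rfl⟩
      exact ⟨0, measurable_const, univ ×ˢ B, MeasurableSet.univ.prod hB, by ext p; simp⟩
  exact hle G hG

variable [MeasurableSpace Ω] [TopologicalSpace Y] [PolishSpace Y] [BorelSpace Y]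

/-- Measurable projection theorem: the projection of a measurable set is analytic, hence
null-measurable, hence measurable for a complete measure. -/
theorem MeasurableSet.image_fst_of_isComplete (μ : Measure Ω) [IsFiniteMeasure μ] [μ.IsComplete]
    {G : Set (Ω × Y)} (hG : MeasurableSet G) : MeasurableSet (Prod.fst '' G) := by
  obtain ⟨Φ, hΦ, G', hG', rfl⟩ := hG.exists_measurable_prodMap_preimage
  have himage : Prod.fst '' (Prod.map Φ id ⁻¹' G') = Φ ⁻¹' (Prod.fst '' G') := by
    ext ω
    simp
  rw [himage]
  exact (((hG'.analyticSet_image measurable_fst).nullMeasurableSet _).preimage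
    (hΦ.quasiMeasurePreserving μ)).measurable_of_complete

end Projection

theorem exists_measurable_index_mem {Ω : Type*} [MeasurableSpace Ω]
    {C : ℕ → Set Ω} (hC : ∀ j, MeasurableSet (C j)) :
    ∃ g : Ω → ℕ, Measurable g ∧ ∀ ω j, ω ∈ C j → ω ∈ C (g ω) := by
  classical
  have hex : ∀ ω, ∃ j, ω ∈ C j ∨ ω ∉ ⋃ i, C i := fun ω => by
    by_cases h : ω ∈ ⋃ i, C i
    · exact (mem_iUnion.1 h).imp fun _ => Or.inl
    · exact ⟨0, Or.inr h⟩
  refine ⟨fun ω => Nat.find (hex ω), measurable_find hex fun j => (hC j).union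
    (MeasurableSet.iUnion hC).compl, fun ω j hj => ?_⟩
  exact (Nat.find_spec (hex ω)).resolve_right (not_not.2 (mem_iUnion.2 ⟨j, hj⟩))

section Selection

variable {Ω E : Type*} [mΩ : MeasurableSpace Ω] [MetricSpace E] [CompleteSpace E]
  [SecondCountableTopology E] [MeasurableSpace E] [BorelSpace E] {G : Set (Ω × E)}

theorem measurableSet_setOf_exists_mem_closedBall (μ : Measure Ω) [IsFiniteMeasure μ]
    [μ.IsComplete] (hG : MeasurableSet G) (c : E) (r : ℝ) :
    MeasurableSet {ω | ∃ b ∈ Metric.closedBall c r, (ω, b) ∈ G} := by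
  have hG' : MeasurableSet ({p : Ω × E | p.2 ∈ Metric.closedBall c r} ∩ G) :=
    (measurable_snd Metric.isClosed_closedBall.measurableSet).inter hG
  convert hG'.image_fst_of_isComplete μ using 1
  ext ω
  simp

variable [Nonempty E]

theorem exists_measurable_exists_mem_closedBall (μ : Measure Ω) [IsFiniteMeasure μ]
    [μ.IsComplete] (hG : MeasurableSet G) {s : ℝ} (hs : 0 < s) :
    ∃ f : Ω → E, Measurable f ∧
      ∀ ω, (∃ b, (ω, b) ∈ G) → ∃ b ∈ Metric.closedBall (f ω) s, (ω, b) ∈ G := by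
  let q := TopologicalSpace.denseSeq E
  obtain ⟨g, hg, hgC⟩ := exists_measurable_index_mem fun j =>
    measurableSet_setOf_exists_mem_closedBall μ hG (q j) s
  refine ⟨fun ω => q (g ω), measurable_from_nat.comp hg, ?_⟩
  rintro ω ⟨b, hb⟩
  obtain ⟨j, hj⟩ := (TopologicalSpace.denseRange_denseSeq E).exists_dist_lt b hs
  exact hgC ω j ⟨b, Metric.mem_closedBall.2 hj.le, hb⟩

theorem exists_measurable_refine_closedBall (μ : Measure Ω) [IsFiniteMeasure μ]
    [μ.IsComplete] (hG : MeasurableSet G) {f : Ω → E} (hf : Measurable f) {r s : ℝ}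
    (hr : 0 ≤ r) (hs : 0 < s) :
    ∃ f' : Ω → E, Measurable f' ∧ (∀ ω, dist (f' ω) (f ω) ≤ r + s) ∧
      ∀ ω, (∃ b ∈ Metric.closedBall (f ω) r, (ω, b) ∈ G) →
        ∃ b ∈ Metric.closedBall (f' ω) s, (ω, b) ∈ G := by
  classical
  let q := TopologicalSpace.denseSeq E
  let C : ℕ → Set Ω := fun j => {ω | ∃ b ∈ Metric.closedBall (q j) s, (ω, b) ∈ G} ∩
    {ω | dist (q j) (f ω) ≤ r + s}
  have hC : ∀ j, MeasurableSet (C j) := fun j =>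
    (measurableSet_setOf_exists_mem_closedBall μ hG (q j) s).inter
      (measurableSet_le ((continuous_const.dist continuous_id).measurable.comp hf)
        measurable_const)
  obtain ⟨g, hg, hgC⟩ := exists_measurable_index_mem hC
  let U := ⋃ j, C j
  refine ⟨fun ω => if ω ∈ U then q (g ω) else f ω,
    Measurable.ite (MeasurableSet.iUnion hC) (measurable_from_nat.comp hg) hf, fun ω => ?_,
    fun ω ⟨b, hbf, hb⟩ => ?_⟩
  · dsimp only
    split_ifs with hω
    · obtain ⟨j, hj⟩ := mem_iUnion.1 hω
      exact (hgC ω j hj).2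
    · simp [add_nonneg hr hs.le]
  obtain ⟨j, hj⟩ := (TopologicalSpace.denseRange_denseSeq E).exists_dist_lt b hs
  have hωj : ω ∈ C j := by
    refine ⟨⟨b, Metric.mem_closedBall.2 hj.le, hb⟩, ?_⟩
    calc dist (q j) (f ω) ≤ dist b (q j) + dist b (f ω) := dist_triangle_left _ _ _
      _ ≤ r + s := by linarith [Metric.mem_closedBall.1 hbf]
  simpa [U, mem_iUnion.2 ⟨j, hωj⟩] using (hgC ω j hωj).1

theorem exists_seq_measurable_exists_mem_closedBall (μ : Measure Ω) [IsFiniteMeasure μ]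
    [μ.IsComplete] (hG : MeasurableSet G) :
    ∃ Y : ℕ → Ω → E, (∀ n, Measurable (Y n)) ∧
      (∀ n ω, dist (Y n ω) (Y (n + 1) ω) ≤ 2 * (1 / 2) ^ n) ∧
      ∀ n ω, (∃ b, (ω, b) ∈ G) → ∃ b ∈ Metric.closedBall (Y n ω) ((1 / 2) ^ n), (ω, b) ∈ G := by
  obtain ⟨f₀, hf₀, hf₀G⟩ := exists_measurable_exists_mem_closedBall μ hG one_pos
  choose T hT using fun (n : ℕ) (f : {f : Ω → E // Measurable f}) =>
    exists_measurable_refine_closedBall μ hG f.2 (r := (1 / 2) ^ n)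
      (s := (1 / 2) ^ (n + 1)) (by positivity) (by positivity)
  let Y : ℕ → {f : Ω → E // Measurable f} := fun n =>
    Nat.rec ⟨f₀, hf₀⟩ (fun n f => ⟨T n f, (hT n f).1⟩) n
  refine ⟨fun n => (Y n).1, fun n => (Y n).2, fun n ω => ?_, fun n => ?_⟩
  · rw [dist_comm]
    refine ((hT n (Y n)).2.1 ω).trans ?_
    rw [pow_succ]
    linarith [pow_pos (one_half_pos (α := ℝ)) n]
  · induction n with
    | zero => exact hf₀G
    | succ n ih => exact fun ω hω => (hT n (Y n)).2.2 ω (ih ω hω)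

theorem exists_measurable_selection (μ : Measure Ω) [IsFiniteMeasure μ] [μ.IsComplete]
    (hG : MeasurableSet G) (hclosed : ∀ ω, IsClosed {b | (ω, b) ∈ G}) :
    ∃ σ : Ω → E, Measurable σ ∧ ∀ ω, (∃ b, (ω, b) ∈ G) → (ω, σ ω) ∈ G := by
  obtain ⟨Y, hYm, hYd, hYG⟩ := exists_seq_measurable_exists_mem_closedBall μ hG
  choose σ hσ using fun ω => cauchySeq_tendsto_of_complete
    (cauchySeq_of_le_geometric _ _ one_half_lt_one fun n => hYd n ω)
  refine ⟨σ, measurable_of_tendsto_metrizable hYm (tendsto_pi_nhds.2 hσ), fun ω hω => ?_⟩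
  choose b hbY hbG using fun n => hYG n ω hω
  have hbσ : Tendsto b atTop (𝓝 (σ ω)) := by
    refine tendsto_iff_dist_tendsto_zero.2 <| squeeze_zero (fun _ => dist_nonneg)
      (fun n => (dist_triangle (b n) (Y n ω) (σ ω)).trans
        (add_le_add (Metric.mem_closedBall.1 (hbY n)) le_rfl)) ?_
    simpa using (tendsto_pow_atTop_nhds_zero_of_lt_one one_half_pos.le one_half_lt_one).add
      (tendsto_iff_dist_tendsto_zero.1 (hσ ω))
  exact (hclosed ω).mem_of_tendsto hbσ (Eventually.of_forall hbG)

end Selection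

theorem exists_seq_of_forall_exists_succ {α : ℕ → Type*} [∀ t, Nonempty (α t)] (N : ℕ)
    (P : ∀ t, α t → Prop) (R : ∀ t, α t → α (t + 1) → Prop) {x : α 0} (hx : P 0 x)
    (step : ∀ t < N, ∀ a, P t a → ∃ b, P (t + 1) b ∧ R t a b) :
    ∃ y : ∀ t, α t, y 0 = x ∧ (∀ t ≤ N, P t (y t)) ∧ ∀ t < N, R t (y t) (y (t + 1)) := by
  classical
  have step' : ∀ t (a : α t), ∃ b, t < N → P t a → P (t + 1) b ∧ R t a b := by
    intro t a
    by_cases h : t < N ∧ P t a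
    · obtain ⟨b, hb⟩ := step t h.1 a h.2
      exact ⟨b, fun _ _ => hb⟩
    · exact ⟨Classical.arbitrary _, fun ht ha => (h ⟨ht, ha⟩).elim⟩
  choose next hnext using step'
  let y : ∀ t, α t := fun t => Nat.rec x (fun t a => next t a) t
  have hP : ∀ t ≤ N, P t (y t) := by
    intro t
    induction t with
    | zero => exact fun _ => hx
    | succ t ih => exact fun ht => (hnext t (y t) ht (ih (Nat.le_of_succ_le ht))).1
  exact ⟨y, rfl, hP, fun t ht => (hnext t (y t) ht (hP t ht.le)).2⟩

theorem l1_nonneg {k : ℕ} (a : Fin k → ℝ) : 0 ≤ l1 a :=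
  Finset.sum_nonneg fun i _ => abs_nonneg (a i)

theorem l1_add_le {k : ℕ} (a b : Fin k → ℝ) : l1 (a + b) ≤ l1 a + l1 b := by
  rw [l1, l1, l1, ← Finset.sum_add_distrib]
  exact Finset.sum_le_sum fun i _ => abs_add_le (a i) (b i)

section MemLinf

variable {Ω : Type*} {F : MeasurableSpace Ω} [MeasurableSpace Ω] {μ : Measure Ω} {k : ℕ}

theorem MemLinf.add {x y : Ω → Fin k → ℝ} (hx : MemLinf μ F x) (hy : MemLinf μ F y) :
    MemLinf μ F (fun ω => x ω + y ω) := by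
  obtain ⟨hxm, Cx, hCx⟩ := hx
  obtain ⟨hym, Cy, hCy⟩ := hy
  refine ⟨hxm.add hym, Cx + Cy, ?_⟩
  filter_upwards [hCx, hCy] with ω hx hy
  exact (l1_add_le _ _).trans (add_le_add hx hy)

theorem MemLinf.of_l1_le_mul {j : ℕ} {x : Ω → Fin k → ℝ} {y : Ω → Fin j → ℝ} (hx : MemLinf μ F x)
    (hy : Measurable[F] y) (K : ℝ) (hyx : ∀ᵐ ω ∂μ, l1 (y ω) ≤ K * l1 (x ω)) : MemLinf μ F y := by
  obtain ⟨-, C, hC⟩ := hx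
  refine ⟨hy, |K| * max C 0, ?_⟩
  filter_upwards [hC, hyx] with ω hx hyx
  calc l1 (y ω) ≤ K * l1 (x ω) := hyx
    _ ≤ |K| * l1 (x ω) := mul_le_mul_of_nonneg_right (le_abs_self K) (l1_nonneg _)
    _ ≤ |K| * max C 0 := mul_le_mul_of_nonneg_left (hx.trans (le_max_left C 0)) (abs_nonneg K)

end MemLinf

namespace VNG

variable {Ω : Type*} [m0 : MeasurableSpace Ω] {μ : Measure Ω} {N : ℕ} {m : ℕ → ℕ} (S : VNG Ω μ N m)

theorem isComplete_trim (t : ℕ) : (μ.trim (S.F_le t)).IsComplete :=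
  ⟨fun s hs => S.F_null t s (measure_eq_zero_of_trim_eq_zero _ hs)⟩

theorem RandomState.sub_self {t : ℕ} (ht : t ≤ N) {x : Ω → Fin (m t) → ℝ}
    (hx : S.RandomState t x) : S.RandomState t (fun ω => x ω - x ω) := by
  simp only [_root_.sub_self]
  refine ⟨⟨measurable_const, 0, by simp [l1]⟩, ?_⟩
  filter_upwards [hx.2] with ω hω
  simpa using S.X_cone t ht ω _ hω 0 le_rfl

theorem add_mem_Z {t : ℕ} (h1 : 1 ≤ t) (h2 : t ≤ N) {ω : Ω}
    {z z' : (Fin (m (t - 1)) → ℝ) × (Fin (m t) → ℝ)} (hz : z ∈ S.Z t ω) (hz' : z' ∈ S.Z t ω) :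
    z + z' ∈ S.Z t ω := by
  have hmid := S.Z_convex t h1 h2 ω hz hz' (by norm_num : (0 : ℝ) ≤ 1 / 2)
    (by norm_num : (0 : ℝ) ≤ 1 / 2) (by norm_num)
  have h := S.Z_cone t h1 h2 ω _ hmid 2 (by norm_num)
  rwa [smul_add, smul_smul, smul_smul, show (2 : ℝ) * (1 / 2) = 1 by norm_num, one_smul,
    one_smul] at h

/-- By (A2), `X (t - 1) ω` is the projection of the convex cone `Z t ω`. -/
theorem add_mem_X (hA2 : S.A2) {t : ℕ} (h1 : 1 ≤ t) (h2 : t ≤ N) {ω : Ω}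
    {a a' : Fin (m (t - 1)) → ℝ} (ha : a ∈ S.X (t - 1) ω) (ha' : a' ∈ S.X (t - 1) ω) :
    a + a' ∈ S.X (t - 1) ω := by
  obtain ⟨b, -, hb⟩ := hA2 t h1 h2 ω a ha
  obtain ⟨b', -, hb'⟩ := hA2 t h1 h2 ω a' ha'
  exact (S.Z_sub t h1 h2 ω (S.add_mem_Z h1 h2 hb hb')).1

theorem exists_measurable_mem_Z [IsFiniteMeasure μ] (hA2 : S.A2) {t : ℕ} (h1 : 1 ≤ t)
    (h2 : t ≤ N) {a : Ω → Fin (m (t - 1)) → ℝ} (ha : Measurable[S.F t] a)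
    (haX : ∀ᵐ ω ∂μ, a ω ∈ S.X (t - 1) ω) :
    ∃ b : Ω → Fin (m t) → ℝ, Measurable[S.F t] b ∧ ∀ᵐ ω ∂μ, (a ω, b ω) ∈ S.Z t ω := by
  have hG : MeasurableSet[(S.F t).prod inferInstance]
      {p : Ω × (Fin (m t) → ℝ) | (a p.1, p.2) ∈ S.Z t p.1} :=
    (measurable_fst.prodMk ((ha.comp measurable_fst).prodMk measurable_snd)) (S.Z_meas t h1 h2)
  have hclosed : ∀ ω, IsClosed {b | (a ω, b) ∈ S.Z t ω} := fun ω =>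
    (S.Z_closed t h1 h2 ω).preimage (Continuous.prodMk_right (a ω))
  have := S.isComplete_trim t
  obtain ⟨b, hbm, hb⟩ := exists_measurable_selection (mΩ := S.F t) (μ.trim (S.F_le t)) hG hclosed
  refine ⟨b, hbm, ?_⟩
  filter_upwards [haX] with ω hω
  obtain ⟨b', -, hb'⟩ := hA2 t h1 h2 ω (a ω) hω
  exact hb ω ⟨b', hb'⟩

theorem exists_successor_sub_mem [IsFiniteMeasure μ] (hA2 : S.A2) (hA3 : S.A3) {t : ℕ}
    (ht : t + 1 ≤ N) {x v u : Ω → Fin (m t) → ℝ} {v' : Ω → Fin (m (t + 1)) → ℝ}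
    (hxv : S.RandomState t (fun ω => x ω - v ω))
    (hvu : MemLinf μ (S.F (t + 1)) (fun ω => v ω - u ω))
    (hvuX : ∀ᵐ ω ∂μ, v ω - u ω ∈ S.X t ω) (huv' : ∀ᵐ ω ∂μ, (u ω, v' ω) ∈ S.Z (t + 1) ω)
    (hv' : MemLinf μ (S.F (t + 1)) v') :
    ∃ y : Ω → Fin (m (t + 1)) → ℝ, (S.RandomState (t + 1) y ∧
      S.RandomState (t + 1) (fun ω => y ω - v' ω)) ∧ ∀ᵐ ω ∂μ, (x ω, y ω) ∈ S.Z (t + 1) ω := by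
  have hxu : MemLinf μ (S.F (t + 1)) (fun ω => x ω - u ω) := by
    have hxv' : MemLinf μ (S.F (t + 1)) (fun ω => x ω - v ω) :=
      ⟨hxv.1.1.mono (S.F_mono t.le_succ) le_rfl, hxv.1.2⟩
    simpa only [sub_add_sub_cancel] using hxv'.add hvu
  have hxuX : ∀ᵐ ω ∂μ, x ω - u ω ∈ S.X t ω := by
    filter_upwards [hxv.2, hvuX] with ω h h'
    have h'' := S.add_mem_X hA2 (t := t + 1) (by omega) ht h h'
    rw [sub_add_sub_cancel] at h''
    exact h''
  obtain ⟨w, hwm, hwZ⟩ := S.exists_measurable_mem_Z hA2 (by omega) ht hxu.1 hxuX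
  obtain ⟨K, hK⟩ := hA3
  have hxy : ∀ᵐ ω ∂μ, (x ω, w ω + v' ω) ∈ S.Z (t + 1) ω := by
    filter_upwards [hwZ, huv'] with ω h h'
    simpa using S.add_mem_Z (by omega) ht h h'
  have hwx : ∀ᵐ ω ∂μ, l1 (w ω) ≤ K (t + 1) * l1 (x ω - u ω) := by
    filter_upwards [hwZ] with ω h
    exact hK (t + 1) (by omega) ht ω _ h
  have hw : S.RandomState (t + 1) w := by
    refine ⟨hxu.of_l1_le_mul hwm (K (t + 1)) hwx, ?_⟩
    filter_upwards [hwZ] with ω h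
    exact (S.Z_sub (t + 1) (by omega) ht ω h).2
  refine ⟨fun ω => w ω + v' ω,
    ⟨⟨hw.1.add hv', ?_⟩, by simpa only [add_sub_cancel_right] using hw⟩, hxy⟩
  filter_upwards [hxy] with ω h
  exact (S.Z_sub (t + 1) (by omega) ht ω h).2

end VNG

theorem path_dominating_W_sequence_general
    {Ω : Type*} [m0 : MeasurableSpace Ω] {μ : MeasureTheory.Measure Ω}
    [MeasureTheory.IsProbabilityMeasure μ]
    {N : ℕ} {m : ℕ → ℕ} (S : VNG Ω μ N m)
    (hA2 : S.A2) (hA3 : S.A3)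
    (ψ : Ω → (Fin (m N) → ℝ) → ℝ)
    (x₀ : Ω → Fin (m 0) → ℝ)
    (v : (t : ℕ) → Ω → Fin (m t) → ℝ) (u : (t : ℕ) → Ω → Fin (m (t - 1)) → ℝ)
    (hW : S.MemW ψ x₀ v u)
    (hdiff : ∀ t, 1 ≤ t → t ≤ N + 1 →
      MemLinf μ (S.F t) (fun ω => v (t - 1) ω - u t ω) ∧
      ∀ᵐ ω ∂μ, v (t - 1) ω - u t ω ∈ S.X (t - 1) ω) :
    ∃ y : (t : ℕ) → Ω → Fin (m t) → ℝ,
      S.IsPath y ∧ y 0 = v 0 ∧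
      ∀ t, t ≤ N →
        MemLinf μ (S.F t) (fun ω => y t ω - v t ω) ∧
        ∀ᵐ ω ∂μ, y t ω - v t ω ∈ S.X t ω := by
  obtain ⟨-, hv, -, huv, -⟩ := hW
  obtain ⟨y, hy0, hP, hR⟩ := exists_seq_of_forall_exists_succ N
    (fun t y => S.RandomState t y ∧ S.RandomState t (fun ω => y ω - v t ω))
    (fun t y y' => ∀ᵐ ω ∂μ, (y ω, y' ω) ∈ S.Z (t + 1) ω)
    ⟨hv 0 N.zero_le, (hv 0 N.zero_le).sub_self S N.zero_le⟩
    fun t ht y hy => S.exists_successor_sub_mem hA2 hA3 ht hy.2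
      (hdiff (t + 1) (by omega) (by omega)).1 (hdiff (t + 1) (by omega) (by omega)).2
      (huv (t + 1) (by omega) ht) (hv (t + 1) ht).1
  refine ⟨y, ⟨fun t ht => (hP t ht).1, fun t h1 h2 => ?_⟩, hy0, fun t ht => (hP t ht).2⟩
  obtain ⟨s, rfl⟩ := Nat.exists_eq_add_of_le' h1
  exact hR s (by omega)

/-- **Lemma 3**: if `ζ = (v₀, u₁, v₁, …, u_N, v_N, u_{N+1}) ∈ 𝒲` satisfies
`v_{t-1} - u_t ∈ 𝒰_t` for `t = 1, …, N+1`, then there is a path `(y_0, …, y_N)`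
with `y_0 = v_0` and `y_t - v_t ∈ 𝒳_t` for `t = 0, 1, …, N`. -/
theorem path_dominating_W_sequence
    {Ω : Type*} [m0 : MeasurableSpace Ω] {μ : MeasureTheory.Measure Ω}
    [MeasureTheory.IsProbabilityMeasure μ]
    {N : ℕ} {m : ℕ → ℕ} (S : VNG Ω μ N m)
    (hA2 : S.A2) (hA3 : S.A3)
    (ψ : Ω → (Fin (m N) → ℝ) → ℝ) (hψ : S.MemPsi ψ)
    (x₀ : Ω → Fin (m 0) → ℝ) (hx₀ : S.IsInitial x₀)
    (v : (t : ℕ) → Ω → Fin (m t) → ℝ) (u : (t : ℕ) → Ω → Fin (m (t - 1)) → ℝ)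
    (hW : S.MemW ψ x₀ v u)
    (hdiff : ∀ t, 1 ≤ t → t ≤ N + 1 →
      MemLinf μ (S.F t) (fun ω => v (t - 1) ω - u t ω) ∧
      ∀ᵐ ω ∂μ, v (t - 1) ω - u t ω ∈ S.X (t - 1) ω) :
    ∃ y : (t : ℕ) → Ω → Fin (m t) → ℝ,
      S.IsPath y ∧ y 0 = v 0 ∧
      ∀ t, t ≤ N →
        MemLinf μ (S.F t) (fun ω => y t ω - v t ω) ∧
        ∀ᵐ ω ∂μ, y t ω - v t ω ∈ S.X t ω :=
  path_dominating_W_sequence_general (m0 := m0) S hA2 hA3 ψ x₀ v u hW hdiff
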